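/- arXiv:1506.01483 — 2 statements merged into one kernel-verified Lean document; each statement's English description precedes it below -/
import Mathlib

section
/- Let I be the edge ideal of Γ and t ≥ 2, and suppose x^a ∈ (I^t : m) \ I^t. Then the support V(a) = {i : a_i ≠ 0} is a dominating set of Γ (i.e., every vertex of Γ lies in V(a) or is adjacent to a vertex of V(a)), and the weighted graph Γ_a has no isolated vertices (every vertex of V(a) lies in an edge of Γ with both endpoints in V(a)). -/
open MvPolynomial

section Defs

variable {V : Type*}

/-- A matching of the vertex-weighted graph `Γ_a`: a multiset of (oriented) edges of `G`
in which every vertex `i` appears at most `a i` times. -/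
def IsWMatching [DecidableEq V] (G : SimpleGraph V) (a : V → ℕ)
    (M : Multiset (V × V)) : Prop :=
  (∀ e ∈ M, G.Adj e.1 e.2) ∧
    ∀ i : V, (M.map Prod.fst).count i + (M.map Prod.snd).count i ≤ a i

/-- The matching number `ν(Γ_a)` of the vertex-weighted graph `Γ_a`. -/
noncomputable def wNu [DecidableEq V] (G : SimpleGraph V) (a : V → ℕ) : ℕ :=
  sSup {k : ℕ | ∃ M : Multiset (V × V), IsWMatching G a M ∧ Multiset.card M = k}

/-- A perfect matching of `Γ_a`: every vertex `i` appears exactly `a i` times. -/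
def IsWPerfectMatching [DecidableEq V] (G : SimpleGraph V) (a : V → ℕ)
    (M : Multiset (V × V)) : Prop :=
  (∀ e ∈ M, G.Adj e.1 e.2) ∧
    ∀ i : V, (M.map Prod.fst).count i + (M.map Prod.snd).count i = a i

/-- `Γ_a` is matching-critical: lowering the weight of any supported vertex
does not decrease the matching number. -/
def MatchingCritical [DecidableEq V] (G : SimpleGraph V) (a : V → ℕ) : Prop :=
  ∀ i : V, a i ≠ 0 → wNu G (a - Pi.single i 1) = wNu G a

/-- The polarization `p(Γ_a)`: each vertex `i` is replaced by `a i` copies. -/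
def polarization (G : SimpleGraph V) (a : V → ℕ) :
    SimpleGraph (Σ i : V, Fin (a i)) where
  Adj u v := G.Adj u.1 v.1
  symm := ⟨fun _ _ h => G.adj_symm h⟩
  loopless := ⟨fun u h => G.irrefl (v := u.1) h⟩

/-- The base graph of `Γ_a` as a spanning subgraph of `G`: edges of `G` between
supported vertices (vertices of weight `0` become isolated). -/
def baseGraph (G : SimpleGraph V) (a : V → ℕ) : SimpleGraph V where
  Adj i j := G.Adj i j ∧ a i ≠ 0 ∧ a j ≠ 0
  symm := ⟨fun _ _ h => ⟨h.1.symm, h.2.2, h.2.1⟩⟩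
  loopless := ⟨fun _ h => G.irrefl h.1⟩

/-- An ear: a walk with endpoints `u`, `v` and list of inner vertices `inner`. -/
structure PreEar (V : Type*) where
  u : V
  inner : List V
  v : V

namespace PreEar

/-- The length of an ear. -/
def len (E : PreEar V) : ℕ := E.inner.length + 1

/-- The vertex list of an ear. -/
def verts (E : PreEar V) : List V := E.u :: (E.inner ++ [E.v])

/-- The ear is a walk in `G`. -/
def IsWalk (G : SimpleGraph V) (E : PreEar V) : Prop := List.Chain' G.Adj E.verts

end PreEar

/-- Endpoints of each subsequent ear belong to earlier ears
(`S` accumulates the vertices seen so far). -/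
def earsOk (G : SimpleGraph V) : List (PreEar V) → List V → Prop
  | [], _ => True
  | E :: rest, S => E.u ∈ S ∧ E.v ∈ S ∧ earsOk G rest (S ++ E.verts)

/-- The number of appearances of `i` in an ear decomposition, not as an endpoint of
the subsequent ears. -/
def earCount [DecidableEq V] (i : V) : List (PreEar V) → ℕ
  | [] => 0
  | E0 :: rest => (E0.u :: E0.inner).count i + (rest.map fun E => E.inner.count i).sum

/-- The number of even ears of an ear decomposition. -/
def evenEars (D : List (PreEar V)) : ℕ :=
  D.countP fun E => E.inner.length % 2 == 1

/-- An ear decomposition starting with an odd closed walk. -/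
def IsInitOddDecomp (G : SimpleGraph V) (D : List (PreEar V)) : Prop :=
  ∃ E0 rest, D = E0 :: rest ∧ E0.u = E0.v ∧ Odd E0.len ∧
    (∀ E ∈ D, E.IsWalk G) ∧ earsOk G rest E0.verts

/-- A family of initially odd ear decompositions of the connected components of the
weighted graph `Γ_a`: each member is an initially odd ear decomposition, every vertex `i`
appears exactly `a i` times (not as an endpoint of subsequent ears), and different members
lie in different connected components of the base graph. -/
def IsInitOddFamily [DecidableEq V] (G : SimpleGraph V) (a : V → ℕ)
    (L : List (List (PreEar V))) : Prop :=
  (∀ D ∈ L, IsInitOddDecomp G D) ∧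
  (∀ i : V, a i = (L.map (earCount i)).sum) ∧
  L.Pairwise (fun D1 D2 =>
    ∀ x y : V, (∃ E ∈ D1, x ∈ E.verts) → (∃ E ∈ D2, y ∈ E.verts) →
      ¬ (baseGraph G a).Reachable x y)

/-- `φ*(Γ_a)`: the minimal total number of even ears in families of initially odd
ear decompositions of the connected components. -/
noncomputable def phiStar [DecidableEq V] (G : SimpleGraph V) (a : V → ℕ) : ℕ :=
  sInf {k : ℕ | ∃ L, IsInitOddFamily G a L ∧ (L.map evenEars).sum = k}

/-- `μ*(Γ) = (φ*(Γ) + n - c) / 2`, where `n` is the number of vertices and `c` the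
number of connected components. -/
noncomputable def muStar [DecidableEq V] (G : SimpleGraph V) : ℕ :=
  (phiStar G (fun _ => 1) + Nat.card V - Nat.card G.ConnectedComponent) / 2

/-- Every connected component of `G` contains an odd cycle (equivalently, an odd
closed walk), i.e. every connected component is non-bipartite. -/
def StronglyNonBip (G : SimpleGraph V) : Prop :=
  ∀ v : V, ∃ u, G.Reachable v u ∧ ∃ p : G.Walk u u, Odd p.length

/-- `G` is non-bipartite: it contains an odd closed walk. -/
def NonBip (G : SimpleGraph V) : Prop :=
  ∃ (u : V) (p : G.Walk u u), Odd p.length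

/-- A vertex cover of `G`. -/
def IsCover (G : SimpleGraph V) (F : Set V) : Prop :=
  ∀ ⦃i j : V⦄, G.Adj i j → i ∈ F ∨ j ∈ F

/-- The closed neighborhood `N[U]`. -/
def closedNbhd (G : SimpleGraph V) (U : Set V) : Set V :=
  {v | v ∈ U ∨ ∃ u ∈ U, G.Adj v u}

/-- The core `c(F) = F \ N[V \ F]` of a cover `F`. -/
def core (G : SimpleGraph V) (F : Set V) : Set V :=
  {i ∈ F | ∀ j, G.Adj i j → j ∈ F}

/-- `U` is a dominating set of `G`: `N[U] = V`. -/
def IsDominating (G : SimpleGraph V) (U : Set V) : Prop :=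
  ∀ v : V, v ∈ U ∨ ∃ u ∈ U, G.Adj v u

/-- The edge ideal of a graph `G` in the polynomial ring over `k`. -/
noncomputable def edgeIdeal (k : Type*) [Field k] (G : SimpleGraph V) :
    Ideal (MvPolynomial V k) :=
  Ideal.span {p | ∃ i j : V, G.Adj i j ∧ p = X i * X j}

/-- The maximal homogeneous ideal `(x_1, ..., x_n)`. -/
noncomputable def maxIdeal (k : Type*) [Field k] (V : Type*) :
    Ideal (MvPolynomial V k) :=
  Ideal.span (Set.range (X : V → MvPolynomial V k))

/-- The monomial `x^a = x_1^{a_1} ⋯ x_n^{a_n}`. -/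
noncomputable def monA (k : Type*) [Field k] [Fintype V] (a : V → ℕ) :
    MvPolynomial V k :=
  ∏ i : V, X i ^ a i

/-- A connected minimal `s`-base: a connected non-bipartite graph with `μ* = s`
containing no proper spanning subgraph which is connected non-bipartite with `μ* = s`. -/
def ConnMinBase [DecidableEq V] (G : SimpleGraph V) (s : ℕ) : Prop :=
  G.Connected ∧ NonBip G ∧ muStar G = s ∧
    ∀ H : SimpleGraph V, H ≤ G → H ≠ G →
      ¬ (H.Connected ∧ NonBip H ∧ muStar H = s)

open Classical in
/-- The restriction of the weight `a` to the connected component of `i`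
in the base graph of `Γ_a`. -/
noncomputable def compWeight [DecidableEq V] (G : SimpleGraph V) (a : V → ℕ) (i : V) :
    V → ℕ :=
  fun j => if (baseGraph G a).Reachable i j then a j else 0

end Defs

/-! If `x_v x^a ∈ I^t` but `x^a ∉ I^t`, some generator of the monomial ideal `I^t` divides
`x_v x^a` but not `x^a`, so it involves `x_v`. A generator of `I^t` is a product of `t` edge
monomials, so the support of its exponent vector has no isolated vertex; hence it also involves
some `x_j` with `j` adjacent to `v`, and `x_j` then divides `x^a`. Applied to every vertex `v`,
this gives both domination and the absence of isolated vertices in `Γ_a`. -/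

open scoped Pointwise

namespace MvPolynomial

variable {σ R : Type*} [CommSemiring R]

theorem span_monomial_image_pow (S : Set (σ →₀ ℕ)) (t : ℕ) :
    Ideal.span ((fun s => monomial s (1 : R)) '' S) ^ t
      = Ideal.span ((fun s => monomial s (1 : R)) '' (t • S)) := by
  induction t with
  | zero => simp [Ideal.one_eq_top]
  | succ t ih =>
    rw [pow_succ, ih, Ideal.span_mul_span', succ_nsmul, ← Set.image2_mul, Set.image2_image_left,
      Set.image2_image_right, ← Set.image2_add, Set.image_image2]
    simp only [monomial_mul, mul_one]

theorem monomial_one_mem_span_monomial_image_iff [Nontrivial R] {S : Set (σ →₀ ℕ)}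
    {c : σ →₀ ℕ} :
    monomial c (1 : R) ∈ Ideal.span ((fun s => monomial s (1 : R)) '' S) ↔ ∃ s ∈ S, s ≤ c := by
  classical
  simp [mem_ideal_span_monomial_image, support_monomial]

end MvPolynomial

open Finsupp

theorem monA_eq_monomial {V : Type*} [Fintype V] (k : Type*) [Field k] (a : V → ℕ) :
    monA k a = monomial (equivFunOnFinite.symm a) 1 := by
  rw [monomial_eq, C_1, one_mul, prod_fintype _ _ (fun _ => pow_zero _)]
  rfl

namespace SimpleGraph

variable {V : Type*} (G : SimpleGraph V)

def edgeExponents : Set (V →₀ ℕ) :=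
  {d | ∃ i j, G.Adj i j ∧ d = single i 1 + single j 1}

def nonisolatedExponents : AddSubmonoid (V →₀ ℕ) where
  carrier := {s | ∀ v, s v ≠ 0 → ∃ j, G.Adj v j ∧ s j ≠ 0}
  zero_mem' := by simp
  add_mem' := by
    intro s s' hs hs' v hv
    by_cases h : s v = 0
    · obtain ⟨j, hadj, hj⟩ := hs' v (by simpa [h] using hv)
      exact ⟨j, hadj, by simp [hj]⟩
    · obtain ⟨j, hadj, hj⟩ := hs v h
      exact ⟨j, hadj, by simp [hj]⟩

theorem edgeExponents_subset_nonisolatedExponents :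
    G.edgeExponents ⊆ G.nonisolatedExponents := by
  rintro _ ⟨i, j, hij, rfl⟩ v hv
  rcases eq_or_ne v i with rfl | hvi
  · exact ⟨j, hij, by simp⟩
  · have hvj : v = j := by
      by_contra hvj
      simp [Ne.symm hvi, Ne.symm hvj] at hv
    subst hvj
    exact ⟨i, hij.symm, by simp⟩

theorem nsmul_edgeExponents_subset_nonisolatedExponents (t : ℕ) :
    t • G.edgeExponents ⊆ G.nonisolatedExponents := by
  induction t with
  | zero => simp
  | succ t ih =>
    rw [succ_nsmul]
    rintro _ ⟨x, hx, y, hy, rfl⟩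
    exact add_mem (ih hx) (G.edgeExponents_subset_nonisolatedExponents hy)

theorem exists_adj_of_le_single_add {s c : V →₀ ℕ} {v : V} (hs : s ∈ G.nonisolatedExponents)
    (hle : s ≤ single v 1 + c) (hnle : ¬ s ≤ c) : ∃ j, G.Adj v j ∧ c j ≠ 0 := by
  have hv : s v ≠ 0 := by
    refine fun hv => hnle fun w => ?_
    rcases eq_or_ne w v with rfl | hwv
    · simp [hv]
    · simpa [single_apply, Ne.symm hwv] using hle w
  obtain ⟨j, hadj, hj⟩ := hs v hv
  have hsj : s j ≤ c j := by simpa [single_apply, G.ne_of_adj hadj] using hle j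
  exact ⟨j, hadj, by omega⟩

variable {k : Type*} [Field k]

theorem edgeIdeal_eq_span_monomial :
    edgeIdeal k G = Ideal.span ((fun s => monomial s (1 : k)) '' G.edgeExponents) := by
  rw [edgeIdeal, Set.image]
  congr 1
  ext p
  simp [edgeExponents, X, monomial_mul, eq_comm]

theorem exists_adj_of_X_mul_mem_edgeIdeal_pow [Fintype V] {a : V → ℕ} {t : ℕ} {v : V}
    (hmul : X v * monA k a ∈ edgeIdeal k G ^ t) (hnot : monA k a ∉ edgeIdeal k G ^ t) :
    ∃ j, G.Adj v j ∧ a j ≠ 0 := by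
  rw [monA_eq_monomial, edgeIdeal_eq_span_monomial, span_monomial_image_pow,
    monomial_one_mem_span_monomial_image_iff] at hnot
  rw [monA_eq_monomial, X, monomial_mul, one_mul, edgeIdeal_eq_span_monomial,
    span_monomial_image_pow, monomial_one_mem_span_monomial_image_iff] at hmul
  obtain ⟨s, hs, hle⟩ := hmul
  exact G.exists_adj_of_le_single_add (G.nsmul_edgeExponents_subset_nonisolatedExponents t hs)
    hle fun hle' => hnot ⟨s, hs, hle'⟩

end SimpleGraph

theorem stmt_3_general {k : Type*} [Field k] {n : ℕ} (G : SimpleGraph (Fin n))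
    (a : Fin n → ℕ) (t : ℕ)
    (h1 : monA k a ∈ Submodule.colon ((edgeIdeal k G) ^ t) (maxIdeal k (Fin n)))
    (h2 : monA k a ∉ (edgeIdeal k G) ^ t) :
    IsDominating G {i | a i ≠ 0} ∧ ∀ i, a i ≠ 0 → ∃ j, a j ≠ 0 ∧ G.Adj i j := by
  have hnbr (v : Fin n) : ∃ j, G.Adj v j ∧ a j ≠ 0 := by
    refine G.exists_adj_of_X_mul_mem_edgeIdeal_pow ?_ h2
    simpa [mul_comm] using Submodule.mem_colon.mp h1 (X v) (Ideal.subset_span ⟨v, rfl⟩)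
  refine ⟨fun v => Or.inr ?_, fun i _ => ?_⟩
  · obtain ⟨j, hadj, hj⟩ := hnbr v
    exact ⟨j, hj, hadj⟩
  · obtain ⟨j, hadj, hj⟩ := hnbr i
    exact ⟨j, hj, hadj⟩

/-- if `x^a ∈ (I^t : m) \ I^t` with `t ≥ 2`, then the support of `a`
is a dominating set of `Γ` and `Γ_a` has no isolated vertices. -/
theorem stmt_3 {k : Type*} [Field k] {n : ℕ} (G : SimpleGraph (Fin n))
    (a : Fin n → ℕ) (t : ℕ) (ht : 2 ≤ t)
    (h1 : monA k a ∈ Submodule.colon ((edgeIdeal k G) ^ t) (maxIdeal k (Fin n)))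
    (h2 : monA k a ∉ (edgeIdeal k G) ^ t) :
    IsDominating G {i | a i ≠ 0} ∧ ∀ i, a i ≠ 0 → ∃ j, a j ≠ 0 ∧ G.Adj i j :=
  stmt_3_general G a t h1 h2
end

section
/- A vertex-weighted graph Γ_a is matching-critical (i.e., ν(Γ_{a−e_i}) = ν(Γ_a) for all i in the support of a) if and only if its polarization p(Γ_a) is a matching-critical graph (i.e., ν(p(Γ_a) − v) = ν(p(Γ_a)) for every vertex v). -/
open MvPolynomial

/-! A matching of `p(Γ_a)` in which each copy `⟨i, k⟩` is covered at most `w ⟨i, k⟩` times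
projects to a matching of `Γ` in which each `i` is covered at most `∑ k, w ⟨i, k⟩` times, and
conversely every such matching of `Γ` lifts, distributing the endpoints at `i` greedily among the
copies of `i`. Hence `ν(p(Γ_a), w) = ν(Γ, ∑ₖ w_{i,k})`, and deleting a copy of `i` from `p(Γ_a)`
has the same effect on the matching number as lowering `a i` by one. -/

section EdgeDegree

variable {α : Type*} [DecidableEq α]

def edgeDegree (M : Multiset (α × α)) (x : α) : ℕ :=
  (M.map Prod.fst).count x + (M.map Prod.snd).count x

@[simp]
lemma edgeDegree_zero : edgeDegree (0 : Multiset (α × α)) = 0 := by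
  funext x
  simp [edgeDegree]

lemma edgeDegree_cons (e : α × α) (M : Multiset (α × α)) :
    edgeDegree (e ::ₘ M) = edgeDegree M + Pi.single e.1 1 + Pi.single e.2 1 := by
  funext x
  simp only [edgeDegree, Multiset.map_cons, Multiset.count_cons, Pi.add_apply, Pi.single_apply,
    eq_comm (a := x)]
  omega

lemma isWMatching_iff (G : SimpleGraph α) (a : α → ℕ) (M : Multiset (α × α)) :
    IsWMatching G a M ↔ (∀ e ∈ M, G.Adj e.1 e.2) ∧ edgeDegree M ≤ a :=
  Iff.rfl

lemma single_le_of_ne_zero {w : α → ℕ} {x : α} (hx : w x ≠ 0) : Pi.single x 1 ≤ w := by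
  intro z
  by_cases hz : z = x
  · subst hz
    simpa using Nat.one_le_iff_ne_zero.mpr hx
  · simp [hz]

end EdgeDegree

section FiberSum

variable {V : Type*} {β : V → Type*} [∀ i, Fintype (β i)]

def fiberSum (w : (Σ i, β i) → ℕ) (i : V) : ℕ :=
  ∑ k, w ⟨i, k⟩

@[simp]
lemma fiberSum_zero : fiberSum (0 : (Σ i, β i) → ℕ) = 0 := by
  funext i
  simp [fiberSum]

lemma fiberSum_add (w w' : (Σ i, β i) → ℕ) : fiberSum (w + w') = fiberSum w + fiberSum w' := by
  funext i
  simp [fiberSum, Finset.sum_add_distrib]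

lemma fiberSum_mono {w w' : (Σ i, β i) → ℕ} (h : w ≤ w') : fiberSum w ≤ fiberSum w' :=
  fun i => Finset.sum_le_sum fun k _ => h ⟨i, k⟩

lemma fiberSum_one (a : V → ℕ) : fiberSum (fun _ : Σ i, Fin (a i) => 1) = a := by
  funext i
  simp [fiberSum]

variable [DecidableEq V] [∀ i, DecidableEq (β i)]

@[simp]
lemma fiberSum_single (x : Σ i, β i) (n : ℕ) :
    fiberSum (Pi.single x n) = Pi.single x.1 n := by
  funext i
  obtain ⟨j, l⟩ := x
  by_cases hij : i = j
  · subst hij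
    simp [fiberSum, Pi.single_apply]
  · simp [fiberSum, hij]

lemma fiberSum_tsub_single {w : (Σ i, β i) → ℕ} {x : Σ i, β i} (hx : w x ≠ 0) :
    fiberSum (w - Pi.single x 1) = fiberSum w - Pi.single x.1 1 := by
  have hw : w - Pi.single x 1 + Pi.single x 1 = w := tsub_add_cancel_of_le (single_le_of_ne_zero hx)
  conv_rhs => rw [← hw, fiberSum_add, fiberSum_single]
  exact (add_tsub_cancel_right _ _).symm

lemma exists_single_le_of_one_le_fiberSum {w : (Σ i, β i) → ℕ} {i : V}
    (h : 1 ≤ fiberSum w i) : ∃ k, Pi.single ⟨i, k⟩ 1 ≤ w := by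
  obtain ⟨k, -, hk⟩ := Finset.exists_ne_zero_of_sum_ne_zero (Nat.one_le_iff_ne_zero.mp h)
  exact ⟨k, single_le_of_ne_zero hk⟩

lemma edgeDegree_map_fst (M : Multiset ((Σ i, β i) × (Σ i, β i))) :
    edgeDegree (M.map (Prod.map Sigma.fst Sigma.fst)) = fiberSum (edgeDegree M) := by
  induction M using Multiset.induction_on with
  | empty => simp
  | cons e M ih =>
    simp only [Multiset.map_cons, edgeDegree_cons, ih, fiberSum_add, fiberSum_single,
      Prod.map_fst, Prod.map_snd]

lemma exists_lift_of_edgeDegree_le_fiberSum (M : Multiset (V × V)) (w : (Σ i, β i) → ℕ)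
    (h : edgeDegree M ≤ fiberSum w) :
    ∃ M' : Multiset ((Σ i, β i) × (Σ i, β i)),
      M'.map (Prod.map Sigma.fst Sigma.fst) = M ∧ edgeDegree M' ≤ w := by
  induction M using Multiset.induction_on generalizing w with
  | empty => exact ⟨0, rfl, by simp⟩
  | cons e M ih =>
    obtain ⟨p, q⟩ := e
    rw [edgeDegree_cons] at h
    obtain ⟨k, hk⟩ := exists_single_le_of_one_le_fiberSum
      (le_trans (by simp only [Pi.add_apply, Pi.single_eq_same]; omega) (h p))
    set w₁ := w - Pi.single ⟨p, k⟩ 1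
    have hw₁ : w = w₁ + Pi.single ⟨p, k⟩ 1 := (tsub_add_cancel_of_le hk).symm
    rw [hw₁, fiberSum_add, fiberSum_single, add_right_comm, add_le_add_iff_right] at h
    obtain ⟨l, hl⟩ := exists_single_le_of_one_le_fiberSum
      (le_trans (by simp only [Pi.add_apply, Pi.single_eq_same]; omega) (h q))
    set w₂ := w₁ - Pi.single ⟨q, l⟩ 1
    have hw₂ : w₁ = w₂ + Pi.single ⟨q, l⟩ 1 := (tsub_add_cancel_of_le hl).symm
    rw [hw₂, fiberSum_add, fiberSum_single, add_le_add_iff_right] at h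
    obtain ⟨M', hM', hdeg⟩ := ih w₂ h
    refine ⟨(⟨p, k⟩, ⟨q, l⟩) ::ₘ M', by simp [hM'], ?_⟩
    rw [edgeDegree_cons, hw₁, hw₂, add_right_comm (edgeDegree M')]
    exact add_le_add (add_le_add hdeg le_rfl) le_rfl

end FiberSum

section Polarization

variable {V : Type*} [DecidableEq V]

lemma wNu_polarization (G : SimpleGraph V) (a : V → ℕ) (w : (Σ i, Fin (a i)) → ℕ) :
    wNu (polarization G a) w = wNu G (fiberSum w) := by
  unfold wNu
  congr 1
  ext n
  constructor
  · rintro ⟨M, hM, rfl⟩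
    rw [isWMatching_iff] at hM
    refine ⟨M.map (Prod.map Sigma.fst Sigma.fst), ⟨?_, ?_⟩, Multiset.card_map _ _⟩
    · intro e he
      obtain ⟨e', he', rfl⟩ := Multiset.mem_map.mp he
      exact hM.1 e' he'
    · exact (edgeDegree_map_fst M).trans_le (fiberSum_mono hM.2)
  · rintro ⟨M, hM, rfl⟩
    rw [isWMatching_iff] at hM
    obtain ⟨M', rfl, hdeg⟩ := exists_lift_of_edgeDegree_le_fiberSum M w hM.2
    refine ⟨M', ⟨fun e he => hM.1 _ (Multiset.mem_map_of_mem _ he), hdeg⟩,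
      (Multiset.card_map _ _).symm⟩

lemma wNu_polarization_one (G : SimpleGraph V) (a : V → ℕ) :
    wNu (polarization G a) (fun _ => 1) = wNu G a := by
  rw [wNu_polarization, fiberSum_one]

lemma wNu_polarization_delete (G : SimpleGraph V) (a : V → ℕ) (x : Σ i, Fin (a i)) :
    wNu (polarization G a) ((fun _ => 1) - Pi.single x 1) = wNu G (a - Pi.single x.1 1) := by
  rw [wNu_polarization, fiberSum_tsub_single one_ne_zero, fiberSum_one]

end Polarization

/-- `Γ_a` is matching-critical iff its polarization is a
matching-critical graph. -/
theorem stmt_5 {V : Type*} [DecidableEq V] (G : SimpleGraph V) (a : V → ℕ) :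
    MatchingCritical G a ↔
      MatchingCritical (polarization G a) (fun _ => 1) := by
  constructor
  · intro hcrit x _
    rw [wNu_polarization_delete, wNu_polarization_one]
    exact hcrit x.1 x.2.pos.ne'
  · intro hcrit i hi
    have h := hcrit ⟨i, ⟨0, Nat.pos_of_ne_zero hi⟩⟩ one_ne_zero
    rwa [wNu_polarization_delete, wNu_polarization_one] at h
end
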